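/- Let A ∈ ℝ^{p×p} and B ∈ ℝ^{q×q} be symmetric positive semidefinite with λ_min(A) ≥ λ_max(B). Let G1 ∈ ℝ^{p×m} with p ≥ m and G2 ∈ ℝ^{q×m}, and set γ1 := λ_min(G1ᵀ G1) and γ2 := λ_max(G2ᵀ G2). If γ1 < γ2, then ‖A − G1 G1ᵀ‖_F² + ‖B − G2 G2ᵀ‖_F² ≥ (1/2)(γ2 − γ1)². -/

import Mathlib

open Matrix

/-- Frobenius inner product of two real matrices. -/
noncomputable def finner {m n : Type*} [Fintype m] [Fintype n]
    (A B : Matrix m n ℝ) : ℝ := (Aᵀ * B).trace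

/-- Frobenius norm of a real matrix. -/
noncomputable def fnorm {m n : Type*} [Fintype m] [Fintype n]
    (A : Matrix m n ℝ) : ℝ := Real.sqrt (finner A A)

open scoped Classical in
/-- Square root of a positive semidefinite real matrix (junk value `0` otherwise). -/
noncomputable def psqrt {r : ℕ} (M : Matrix (Fin r) (Fin r) ℝ) : Matrix (Fin r) (Fin r) ℝ :=
  if h : M.PosSemidef then (h.1.eigenvectorUnitary : Matrix (Fin r) (Fin r) ℝ) *
    diagonal ((↑) ∘ Real.sqrt ∘ h.1.eigenvalues) *
    (star h.1.eigenvectorUnitary : Matrix (Fin r) (Fin r) ℝ) else 0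

open scoped Classical in
/-- Smallest eigenvalue of a symmetric real matrix (junk value `0` otherwise). -/
noncomputable def lammin {r : ℕ} (M : Matrix (Fin r) (Fin r) ℝ) : ℝ :=
  if h : M.IsHermitian then ⨅ i, h.eigenvalues i else 0

open scoped Classical in
/-- Largest eigenvalue of a symmetric real matrix (junk value `0` otherwise). -/
noncomputable def lammax {r : ℕ} (M : Matrix (Fin r) (Fin r) ℝ) : ℝ :=
  if h : M.IsHermitian then ⨆ i, h.eigenvalues i else 0

/-!
For a unit vector `v`, `(vᵀ M v)² ≤ ‖M‖_F²` by Cauchy–Schwarz against `v vᵀ`, whose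
Frobenius norm is `1`. Normalizing the image under `G₂` of a top eigenvector of `G₂ᵀ G₂`
gives a unit `u` with `uᵀ G₂ G₂ᵀ u = γ₂`; likewise a bottom eigenvector of `G₁ᵀ G₁` gives a
unit `v` with `vᵀ G₁ G₁ᵀ v = γ₁`, unless `G₁` kills it, in which case `γ₁ = 0` and, as
`m ≤ p`, `G₁ᵀ` has a unit kernel vector `v`. The Rayleigh bounds for `A` and `B` then give
`x := vᵀ (A - G₁ G₁ᵀ) v ≥ λ_min A - γ₁` and `y := uᵀ (B - G₂ G₂ᵀ) u ≤ λ_max B - γ₂`, so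
`x - y ≥ γ₂ - γ₁ > 0`, and `x² + y² ≥ (x - y)² / 2`.
-/

lemma finner_self_eq_sum_sq {m n : Type*} [Fintype m] [Fintype n] (M : Matrix m n ℝ) :
    finner M M = ∑ ij : m × n, M ij.1 ij.2 ^ 2 := by
  rw [Fintype.sum_prod_type, Finset.sum_comm]
  simp [finner, Matrix.trace, Matrix.mul_apply, sq]

lemma fnorm_sq {m n : Type*} [Fintype m] [Fintype n] (M : Matrix m n ℝ) :
    fnorm M ^ 2 = finner M M :=
  Real.sq_sqrt (finner_self_eq_sum_sq M ▸ by positivity)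

lemma sq_dotProduct_mulVec_le_fnorm_sq {n : Type*} [Fintype n] (M : Matrix n n ℝ)
    {v : n → ℝ} (hv : v ⬝ᵥ v = 1) : (v ⬝ᵥ (M *ᵥ v)) ^ 2 ≤ fnorm M ^ 2 := by
  have hquad : v ⬝ᵥ (M *ᵥ v) = ∑ ij : n × n, M ij.1 ij.2 * (v ij.1 * v ij.2) := by
    rw [Fintype.sum_prod_type]
    simp only [dotProduct, mulVec, Finset.mul_sum]
    exact Finset.sum_congr rfl fun i _ => Finset.sum_congr rfl fun j _ => by ring
  have hunit : ∑ ij : n × n, (v ij.1 * v ij.2) ^ 2 = 1 := by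
    rw [Fintype.sum_prod_type]
    simp only [mul_pow, ← Finset.mul_sum, ← Finset.sum_mul]
    simp only [dotProduct, ← sq] at hv
    rw [hv, one_mul]
  calc (v ⬝ᵥ (M *ᵥ v)) ^ 2
      ≤ (∑ ij : n × n, M ij.1 ij.2 ^ 2) * ∑ ij : n × n, (v ij.1 * v ij.2) ^ 2 :=
        hquad ▸ Finset.sum_mul_sq_le_sq_mul_sq _ _ _
    _ = fnorm M ^ 2 := by rw [hunit, mul_one, fnorm_sq, finner_self_eq_sum_sq]

lemma exists_unit_dotProduct_mulVec_eq_of_mulVec_eq_smul {n : Type*} [Fintype n]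
    {M : Matrix n n ℝ} {x : n → ℝ} {c : ℝ} (hx : x ≠ 0) (hMx : M *ᵥ x = c • x) :
    ∃ u : n → ℝ, u ⬝ᵥ u = 1 ∧ u ⬝ᵥ (M *ᵥ u) = c := by
  have hpos : 0 < x ⬝ᵥ x := by simpa using dotProduct_self_star_pos_iff.mpr hx
  set s := Real.sqrt (x ⬝ᵥ x)
  have hs : s ^ 2 = x ⬝ᵥ x := Real.sq_sqrt hpos.le
  have hs0 : s ≠ 0 := (Real.sqrt_pos.mpr hpos).ne'
  have hunit : (s⁻¹ • x) ⬝ᵥ (s⁻¹ • x) = 1 := by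
    rw [smul_dotProduct, dotProduct_smul, smul_smul, ← hs, smul_eq_mul]
    field_simp
  refine ⟨s⁻¹ • x, hunit, ?_⟩
  rw [mulVec_smul, hMx, smul_comm, dotProduct_smul, hunit, smul_eq_mul, mul_one]

section Rayleigh

variable {n : Type*} [Fintype n] [DecidableEq n] {M : Matrix n n ℝ}

/-- `w` is the coordinate vector of `v` in an orthonormal eigenbasis of `M`. -/
lemma Matrix.IsHermitian.exists_dotProduct_mulVec_eq_sum (hM : M.IsHermitian) (v : n → ℝ) :
    ∃ w : n → ℝ, v ⬝ᵥ (M *ᵥ v) = ∑ i, hM.eigenvalues i * w i ^ 2 ∧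
      v ⬝ᵥ v = ∑ i, w i ^ 2 := by
  set U : Matrix n n ℝ := (hM.eigenvectorUnitary : Matrix n n ℝ)
  have hvU : v ᵥ* U = star U *ᵥ v := by
    rw [star_eq_conjTranspose, conjTranspose_eq_transpose_of_trivial, mulVec_transpose]
  refine ⟨star U *ᵥ v, ?_, ?_⟩
  · conv_lhs => rw [hM.spectral_theorem, Unitary.conjStarAlgAut_apply]
    rw [← mulVec_mulVec, dotProduct_mulVec, ← vecMul_vecMul, hvU]
    simp only [vecMul_diagonal, dotProduct, Function.comp_apply, RCLike.ofReal_real_eq_id,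
      id_eq]
    exact Finset.sum_congr rfl fun i _ => by ring
  · have hUU : U * star U = 1 := mem_unitaryGroup_iff.mp hM.eigenvectorUnitary.2
    calc v ⬝ᵥ v = (v ᵥ* U) ⬝ᵥ (star U *ᵥ v) := by
          rw [← dotProduct_mulVec, mulVec_mulVec, hUU, one_mulVec]
      _ = ∑ i, (star U *ᵥ v) i ^ 2 := by simp only [hvU, dotProduct, sq]

lemma Matrix.IsHermitian.exists_unit_mulVec_eq_smul (hM : M.IsHermitian) (i : n) :
    ∃ w : n → ℝ, w ⬝ᵥ w = 1 ∧ M *ᵥ w = hM.eigenvalues i • w := by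
  refine ⟨hM.eigenvectorBasis i, ?_, hM.mulVec_eigenvectorBasis i⟩
  have h := real_inner_self_eq_norm_sq (hM.eigenvectorBasis i)
  rwa [EuclideanSpace.inner_eq_star_dotProduct, hM.eigenvectorBasis.orthonormal.1 i, one_pow,
    star_trivial] at h

end Rayleigh

section Extremal

variable {n : ℕ} {M : Matrix (Fin n) (Fin n) ℝ}

lemma lammin_mul_dotProduct_le (hM : M.IsHermitian) (v : Fin n → ℝ) :
    lammin M * (v ⬝ᵥ v) ≤ v ⬝ᵥ (M *ᵥ v) := by
  obtain ⟨w, hquad, hnorm⟩ := hM.exists_dotProduct_mulVec_eq_sum v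
  rw [hquad, hnorm, Finset.mul_sum]
  refine Finset.sum_le_sum fun i _ => mul_le_mul_of_nonneg_right ?_ (sq_nonneg _)
  rw [lammin, dif_pos hM]
  exact ciInf_le (Finite.bddBelow_range _) i

lemma dotProduct_mulVec_le_lammax_mul (hM : M.IsHermitian) (v : Fin n → ℝ) :
    v ⬝ᵥ (M *ᵥ v) ≤ lammax M * (v ⬝ᵥ v) := by
  obtain ⟨w, hquad, hnorm⟩ := hM.exists_dotProduct_mulVec_eq_sum v
  rw [hquad, hnorm, Finset.mul_sum]
  refine Finset.sum_le_sum fun i _ => mul_le_mul_of_nonneg_right ?_ (sq_nonneg _)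
  rw [lammax, dif_pos hM]
  exact le_ciSup (Finite.bddAbove_range _) i

lemma Matrix.IsHermitian.exists_unit_mulVec_eq_lammin_smul [Nonempty (Fin n)]
    (hM : M.IsHermitian) :
    ∃ w : Fin n → ℝ, w ⬝ᵥ w = 1 ∧ M *ᵥ w = lammin M • w := by
  obtain ⟨i, hi⟩ := exists_eq_ciInf_of_finite (f := hM.eigenvalues)
  rw [lammin, dif_pos hM, ← hi]
  exact hM.exists_unit_mulVec_eq_smul i

lemma Matrix.IsHermitian.exists_unit_mulVec_eq_lammax_smul [Nonempty (Fin n)]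
    (hM : M.IsHermitian) :
    ∃ w : Fin n → ℝ, w ⬝ᵥ w = 1 ∧ M *ᵥ w = lammax M • w := by
  obtain ⟨i, hi⟩ := exists_eq_ciSup_of_finite (f := hM.eigenvalues)
  rw [lammax, dif_pos hM, ← hi]
  exact hM.exists_unit_mulVec_eq_smul i

lemma lammin_nonneg (hM : M.PosSemidef) : 0 ≤ lammin M := by
  rw [lammin, dif_pos hM.1]
  exact Real.iInf_nonneg hM.eigenvalues_nonneg

lemma nonempty_of_lammax_ne_zero (h : lammax M ≠ 0) : Nonempty (Fin n) := by
  by_contra hempty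
  rw [not_nonempty_iff] at hempty
  exact h (by unfold lammax; split_ifs <;> simp)

end Extremal

lemma posSemidef_transpose_mul_self {m n : Type*} [Fintype m] [Fintype n] (G : Matrix m n ℝ) :
    (Gᵀ * G).PosSemidef := by
  simpa using posSemidef_conjTranspose_mul_self G

lemma dotProduct_transpose_mul_self_mulVec {m n : Type*} [Fintype m] [Fintype n]
    (G : Matrix m n ℝ) (w : n → ℝ) : w ⬝ᵥ ((Gᵀ * G) *ᵥ w) = (G *ᵥ w) ⬝ᵥ (G *ᵥ w) := by
  rw [← mulVec_mulVec, dotProduct_mulVec, vecMul_transpose]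

lemma mul_transpose_mulVec_mulVec_eq_smul {m n : Type*} [Fintype m] [Fintype n]
    {G : Matrix m n ℝ} {w : n → ℝ} {c : ℝ} (h : (Gᵀ * G) *ᵥ w = c • w) :
    (G * Gᵀ) *ᵥ (G *ᵥ w) = c • (G *ᵥ w) := by
  rw [mulVec_mulVec, Matrix.mul_assoc, ← mulVec_mulVec, h, mulVec_smul]

lemma exists_ne_zero_transpose_mulVec_eq_zero {K m n : Type*} [Field K] [Fintype m] [Fintype n]
    (hnm : Fintype.card n ≤ Fintype.card m) {G : Matrix m n K} {w : n → K} (hw : w ≠ 0)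
    (hGw : G *ᵥ w = 0) : ∃ z, z ≠ 0 ∧ Gᵀ *ᵥ z = 0 := by
  have hker : 0 < Module.finrank K (LinearMap.ker G.mulVecLin) :=
    Module.finrank_pos_iff_exists_ne_zero.mpr ⟨⟨w, hGw⟩, fun h => hw (congrArg Subtype.val h)⟩
  have hG := G.mulVecLin.finrank_range_add_finrank_ker
  have hGt := Gᵀ.mulVecLin.finrank_range_add_finrank_ker
  have hrank : Gᵀ.rank = G.rank := rank_transpose G
  simp only [Module.finrank_fintype_fun_eq_card] at hG hGt
  have hkert : 0 < Module.finrank K (LinearMap.ker Gᵀ.mulVecLin) := by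
    unfold Matrix.rank at hrank
    omega
  obtain ⟨⟨z, hz⟩, hz0⟩ := Module.finrank_pos_iff_exists_ne_zero.mp hkert
  exact ⟨z, by simpa using hz0, hz⟩

section GramExtremal

variable {p m : ℕ}

lemma exists_unit_dotProduct_mul_transpose_mulVec_le_lammin [Nonempty (Fin m)] (hmp : m ≤ p)
    (G : Matrix (Fin p) (Fin m) ℝ) :
    ∃ v : Fin p → ℝ, v ⬝ᵥ v = 1 ∧ v ⬝ᵥ ((G * Gᵀ) *ᵥ v) ≤ lammin (Gᵀ * G) := by
  have hGG := posSemidef_transpose_mul_self G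
  obtain ⟨w, hw, hGw⟩ := hGG.1.exists_unit_mulVec_eq_lammin_smul
  by_cases hGw0 : G *ᵥ w = 0
  · have hw0 : w ≠ 0 := by rintro rfl; simp at hw
    obtain ⟨z, hz0, hGz⟩ :=
      exists_ne_zero_transpose_mulVec_eq_zero (G := G) (by simpa using hmp) hw0 hGw0
    obtain ⟨v, hv, hvG⟩ :=
      exists_unit_dotProduct_mulVec_eq_of_mulVec_eq_smul (M := G * Gᵀ) (c := 0) hz0
        (by rw [← mulVec_mulVec, hGz, mulVec_zero, zero_smul])
    exact ⟨v, hv, hvG.trans_le (lammin_nonneg hGG)⟩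
  · obtain ⟨v, hv, hvG⟩ := exists_unit_dotProduct_mulVec_eq_of_mulVec_eq_smul hGw0
      (mul_transpose_mulVec_mulVec_eq_smul hGw)
    exact ⟨v, hv, hvG.le⟩

lemma exists_unit_dotProduct_mul_transpose_mulVec_eq_lammax (G : Matrix (Fin p) (Fin m) ℝ)
    (hpos : 0 < lammax (Gᵀ * G)) :
    ∃ u : Fin p → ℝ, u ⬝ᵥ u = 1 ∧ u ⬝ᵥ ((G * Gᵀ) *ᵥ u) = lammax (Gᵀ * G) := by
  have := nonempty_of_lammax_ne_zero hpos.ne'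
  obtain ⟨w, hw, hGw⟩ := (posSemidef_transpose_mul_self G).1.exists_unit_mulVec_eq_lammax_smul
  have hGw0 : G *ᵥ w ≠ 0 := by
    intro h
    have hnorm := dotProduct_transpose_mul_self_mulVec G w
    rw [hGw, dotProduct_smul, hw, h, dotProduct_zero, smul_eq_mul, mul_one] at hnorm
    exact hpos.ne' hnorm
  exact exists_unit_dotProduct_mulVec_eq_of_mulVec_eq_smul hGw0
    (mul_transpose_mulVec_mulVec_eq_smul hGw)

end GramExtremal

lemma half_sq_le_sq_add_sq {d x y : ℝ} (hd : 0 ≤ d) (h : d ≤ x - y) :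
    1 / 2 * d ^ 2 ≤ x ^ 2 + y ^ 2 := by
  nlinarith [sq_nonneg (x + y)]

/-- quantitative eigenvalue-matching lower bound, core of the paper's
appendix Lemma 15. -/
theorem stmt_15 {p q m : ℕ} (hpm : m ≤ p)
    (A : Matrix (Fin p) (Fin p) ℝ) (B : Matrix (Fin q) (Fin q) ℝ)
    (hA : A.PosSemidef) (hB : B.PosSemidef)
    (hAB : lammax B ≤ lammin A)
    (G1 : Matrix (Fin p) (Fin m) ℝ) (G2 : Matrix (Fin q) (Fin m) ℝ)
    (γ1 γ2 : ℝ) (hγ1 : γ1 = lammin (G1ᵀ * G1)) (hγ2 : γ2 = lammax (G2ᵀ * G2))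
    (hlt : γ1 < γ2) :
    1 / 2 * (γ2 - γ1) ^ 2 ≤ fnorm (A - G1 * G1ᵀ) ^ 2 + fnorm (B - G2 * G2ᵀ) ^ 2 := by
  subst hγ1 hγ2
  have hγ2 : 0 < lammax (G2ᵀ * G2) :=
    (lammin_nonneg (posSemidef_transpose_mul_self G1)).trans_lt hlt
  have : Nonempty (Fin m) := nonempty_of_lammax_ne_zero hγ2.ne'
  obtain ⟨v, hv, hvG⟩ := exists_unit_dotProduct_mul_transpose_mulVec_le_lammin hpm G1
  obtain ⟨u, hu, huG⟩ := exists_unit_dotProduct_mul_transpose_mulVec_eq_lammax G2 hγ2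
  have hvA := lammin_mul_dotProduct_le hA.1 v
  have huB := dotProduct_mulVec_le_lammax_mul hB.1 u
  rw [hv, mul_one] at hvA
  rw [hu, mul_one] at huB
  have hgap : lammax (G2ᵀ * G2) - lammin (G1ᵀ * G1) ≤
      v ⬝ᵥ ((A - G1 * G1ᵀ) *ᵥ v) - u ⬝ᵥ ((B - G2 * G2ᵀ) *ᵥ u) := by
    simp only [sub_mulVec, dotProduct_sub]
    linarith
  calc _ ≤ (v ⬝ᵥ ((A - G1 * G1ᵀ) *ᵥ v)) ^ 2 + (u ⬝ᵥ ((B - G2 * G2ᵀ) *ᵥ u)) ^ 2 :=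
        half_sq_le_sq_add_sq (sub_nonneg.mpr hlt.le) hgap
    _ ≤ _ := add_le_add (sq_dotProduct_mulVec_le_fnorm_sq _ hv)
        (sq_dotProduct_mulVec_le_fnorm_sq _ hu)
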